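/- The set of points of the Brieskorn manifold W_k^5 = {z_0^k + z_1^2 + z_2^2 + z_3^2 = 0} ∩ S^7(√2) that are fixed by all rotations about the z_1-axis (i.e. fixed by the SO(3)-subgroup of matrices fixing the first standard basis vector of R^3, acting on coordinates (z_1,z_2,z_3)) is exactly { (e^{iφ}, ±i e^{ikφ/2}, 0, 0) : 0 ≤ φ < 2π }. This set is connected if k is odd and has exactly two connected components if k is even. -/

import Mathlib

open Matrix

/-- The action of a real `3×3` matrix on the last three coordinates of `ℂ⁴`, applied
simultaneously to real and imaginary parts, fixing the coordinate `z₀`. -/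
noncomputable def so3ActC4 (A : Matrix (Fin 3) (Fin 3) ℝ) (z : Fin 4 → ℂ) : Fin 4 → ℂ :=
  fun j => Fin.cases (z 0)
    (fun i : Fin 3 =>
      ((A.mulVec (fun l : Fin 3 => (z l.succ).re) i : ℝ) : ℂ)
        + ((A.mulVec (fun l : Fin 3 => (z l.succ).im) i : ℝ) : ℂ) * Complex.I) j

/-- The set of points of the Brieskorn manifold
`W_k⁵ = {z₀ᵏ + z₁² + z₂² + z₃² = 0} ∩ S⁷(√2)` fixed by all rotations about the
`z₁`-axis (the `SO(3)`-matrices fixing the first standard basis vector of `ℝ³`). -/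
noncomputable def axisFixedSet (k : ℕ) : Set (Fin 4 → ℂ) :=
  {z | (z 0 ^ k + z 1 ^ 2 + z 2 ^ 2 + z 3 ^ 2 = 0 ∧
        ∑ j, Complex.normSq (z j) = 2) ∧
    ∀ A : Matrix (Fin 3) (Fin 3) ℝ, Aᵀ * A = 1 → A.det = 1 →
      A.mulVec (fun i => if i = 0 then 1 else 0) = (fun i => if i = 0 then 1 else 0) →
      so3ActC4 A z = z}

/-!
A rotation fixing the first axis acts trivially on points with `z₂ = z₃ = 0`, while the half-turn
`diag(1, -1, -1)` forces `z₂ = z₃ = 0`. What remains is `z₁² = -z₀ᵏ` and `|z₀|² + |z₁|² = 2`, so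
`r = |z₀|` solves `r² + rᵏ = 2`, whence `r = 1`, `z₀ = e^{iφ}` and `z₁ = ±i e^{ikφ/2}`.
Replacing `φ` by `φ + 2π` multiplies the second coordinate by `(-1)ᵏ`: for odd `k` the two branches
join into one closed curve, for even `k` they are two disjoint closed curves, distinguished by
`z₁ = ±i z₀^{k/2}`.
-/

open Set Complex
open scoped Real

theorem eq_one_of_pow_add_pow_eq_two {r : ℝ} (hr : 0 ≤ r) {m n : ℕ} (hm : m ≠ 0)
    (h : r ^ m + r ^ n = 2) : r = 1 := by
  rcases lt_trichotomy r 1 with hlt | heq | hgt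
  · have := pow_lt_one₀ hr hlt hm
    have := pow_le_one₀ (n := n) hr hlt.le
    linarith
  · exact heq
  · have := one_lt_pow₀ hgt hm
    have := one_le_pow₀ (n := n) hgt.le
    linarith

theorem nonempty_connectedComponents_union_equiv_fin_two {X : Type*} [TopologicalSpace X]
    {A B : Set X} (hA : IsClosed A) (hB : IsClosed B) (hAB : Disjoint A B)
    (hAconn : IsConnected A) (hBconn : IsConnected B) :
    Nonempty (ConnectedComponents ↥(A ∪ B) ≃ Fin 2) := by
  have hcompl : ((↑) ⁻¹' A : Set ↥(A ∪ B))ᶜ = (↑) ⁻¹' B := by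
    ext ⟨x, hx | hx⟩
    · simpa [hx] using hAB.notMem_of_mem_left hx
    · simpa [hx] using hAB.notMem_of_mem_right hx
  have hclosed {C : Set X} (hC : IsClosed C) : IsClosed ((↑) ⁻¹' C : Set ↥(A ∪ B)) :=
    hC.preimage continuous_subtype_val
  have hconn {C : Set X} (hCAB : C ⊆ A ∪ B) (hC : IsConnected C) :
      IsConnected ((↑) ⁻¹' C : Set ↥(A ∪ B)) := by
    refine ((image_nonempty (f := Subtype.val)).and
      Topology.IsInducing.subtypeVal.isPreconnected_image).mp ?_
    rwa [image_preimage_eq_of_subset (by rwa [Subtype.range_coe])]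
  have hAclopen : IsClopen ((↑) ⁻¹' A : Set ↥(A ∪ B)) :=
    ⟨hclosed hA, by rw [← isClosed_compl_iff, hcompl]; exact hclosed hB⟩
  refine ⟨ConnectedComponents.equivOfIsClopenOfIsConnected
    (U := ![(↑) ⁻¹' A, (↑) ⁻¹' B]) ?_ ?_ ?_ ?_⟩
  · intro i
    fin_cases i
    · exact hAclopen
    · simpa [← hcompl] using hAclopen.compl
  · have hdisj : Disjoint ((↑) ⁻¹' A : Set ↥(A ∪ B)) ((↑) ⁻¹' B) := hAB.preimage _
    intro i j hij
    fin_cases i <;> fin_cases j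
    exacts [absurd rfl hij, hdisj, hdisj.symm, absurd rfl hij]
  · ext x
    simp [Fin.exists_fin_two, ← hcompl, em]
  · intro i
    fin_cases i
    · exact hconn subset_union_left hAconn
    · exact hconn subset_union_right hBconn

theorem so3ActC4_zero (A : Matrix (Fin 3) (Fin 3) ℝ) (z : Fin 4 → ℂ) : so3ActC4 A z 0 = z 0 :=
  rfl

theorem so3ActC4_succ (A : Matrix (Fin 3) (Fin 3) ℝ) (z : Fin 4 → ℂ) (i : Fin 3) :
    so3ActC4 A z i.succ =
      ((A *ᵥ fun l => (z l.succ).re) i : ℂ) + ((A *ᵥ fun l => (z l.succ).im) i : ℂ) * I :=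
  rfl

theorem so3ActC4_diagonal (d : Fin 3 → ℝ) (z : Fin 4 → ℂ) :
    so3ActC4 (diagonal d) z = ![z 0, d 0 * z 1, d 1 * z 2, d 2 * z 3] := by
  funext j
  refine Fin.cases (so3ActC4_zero _ _) (fun i => ?_) j
  rw [so3ActC4_succ, mulVec_diagonal, mulVec_diagonal, ofReal_mul, ofReal_mul, mul_assoc,
    ← mul_add, re_add_im]
  fin_cases i <;> rfl

theorem so3ActC4_eq_self_of_axis {A : Matrix (Fin 3) (Fin 3) ℝ}
    (hA : A *ᵥ (fun i => if i = 0 then 1 else 0) = fun i => if i = 0 then 1 else 0)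
    {z : Fin 4 → ℂ} (h2 : z 2 = 0) (h3 : z 3 = 0) : so3ActC4 A z = z := by
  have hsupp (f : ℂ → ℝ) (hf : f 0 = 0) :
      (fun l : Fin 3 => f (z l.succ)) = f (z 1) • fun i => if i = 0 then 1 else 0 := by
    funext l; fin_cases l <;> simp [hf, h2, h3]
  funext j
  refine Fin.cases (so3ActC4_zero _ _) (fun i => ?_) j
  rw [so3ActC4_succ, hsupp re zero_re, hsupp im zero_im, mulVec_smul, mulVec_smul, hA]
  fin_cases i <;> simp [h2, h3]

theorem mem_axisFixedSet_iff {k : ℕ} {z : Fin 4 → ℂ} :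
    z ∈ axisFixedSet k ↔
      (z 0 ^ k + z 1 ^ 2 = 0 ∧ normSq (z 0) + normSq (z 1) = 2) ∧ z 2 = 0 ∧ z 3 = 0 := by
  constructor
  · rintro ⟨⟨heq, hnorm⟩, hfix⟩
    have hhalf : so3ActC4 (diagonal ![1, -1, -1]) z = z := by
      refine hfix _ ?_ ?_ ?_
      · rw [diagonal_transpose, diagonal_mul_diagonal, ← diagonal_one]
        congr 1; funext i; fin_cases i <;> norm_num
      · simp [det_diagonal, Fin.prod_univ_three]
      · funext i; fin_cases i <;> simp [mulVec_diagonal]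
    rw [so3ActC4_diagonal] at hhalf
    have h2 : ((-1 : ℝ) : ℂ) * z 2 = z 2 := congrFun hhalf 2
    have h3 : ((-1 : ℝ) : ℂ) * z 3 = z 3 := congrFun hhalf 3
    push_cast at h2 h3
    replace h2 : z 2 = 0 := by linear_combination -h2 / 2
    replace h3 : z 3 = 0 := by linear_combination -h3 / 2
    refine ⟨⟨?_, ?_⟩, h2, h3⟩
    · simpa [h2, h3] using heq
    · simpa [Fin.sum_univ_four, h2, h3] using hnorm
  · rintro ⟨⟨heq, hnorm⟩, h2, h3⟩
    refine ⟨⟨by simpa [h2, h3] using heq, by simpa [Fin.sum_univ_four, h2, h3] using hnorm⟩,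
      fun A _ _ hA => so3ActC4_eq_self_of_axis hA h2 h3⟩

noncomputable def brieskornAxisCurve (k : ℕ) (ε : ℂ) (φ : ℝ) : Fin 4 → ℂ :=
  ![exp (φ * I), ε * (I * exp (((k : ℝ) * φ / 2 : ℝ) * I)), 0, 0]

theorem continuous_brieskornAxisCurve (k : ℕ) (ε : ℂ) :
    Continuous (brieskornAxisCurve k ε) := by
  refine continuous_pi fun j => ?_
  fin_cases j <;> simp [brieskornAxisCurve] <;> fun_prop

theorem brieskornAxisCurve_add_two_pi (k : ℕ) (ε : ℂ) (φ : ℝ) :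
    brieskornAxisCurve k ε (φ + 2 * π) = brieskornAxisCurve k ((-1) ^ k * ε) φ := by
  have h0 : exp (↑(φ + 2 * π) * I) = exp (φ * I) := by
    rw [ofReal_add, add_mul, exp_add, ofReal_mul, ofReal_ofNat, exp_two_pi_mul_I, mul_one]
  have h1 : exp (↑((k : ℝ) * (φ + 2 * π) / 2) * I) =
      (-1) ^ k * exp (↑((k : ℝ) * φ / 2) * I) := by
    rw [show (↑((k : ℝ) * (φ + 2 * π) / 2) * I : ℂ) = k * (π * I) + ↑((k : ℝ) * φ / 2) * I by
      push_cast; ring, exp_add, exp_nat_mul, exp_pi_mul_I]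
  simp only [brieskornAxisCurve, h0, h1]
  ring_nf

theorem brieskornAxisCurve_one_eq_of_two_mul {k m : ℕ} (hkm : k = 2 * m) (ε : ℂ) (φ : ℝ) :
    brieskornAxisCurve k ε φ 1 = ε * I * brieskornAxisCurve k ε φ 0 ^ m := by
  simp only [brieskornAxisCurve, cons_val_one, cons_val_zero, ← exp_nat_mul]
  rw [mul_assoc]
  congr 3
  subst hkm; push_cast; ring

theorem sq_I_mul_exp_half (k : ℕ) (φ : ℝ) :
    (I * exp (((k : ℝ) * φ / 2 : ℝ) * I)) ^ 2 = -exp (φ * I) ^ k := by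
  rw [mul_pow, I_sq, ← exp_nat_mul, ← exp_nat_mul]
  push_cast
  ring_nf

theorem brieskornAxisCurve_mem {k : ℕ} {ε : ℂ} (hε : ε ^ 2 = 1) (φ : ℝ) :
    brieskornAxisCurve k ε φ ∈ axisFixedSet k := by
  have hεnorm : ‖ε‖ = 1 :=
    (pow_eq_one_iff_of_nonneg (norm_nonneg ε) two_ne_zero).1 (by rw [← norm_pow, hε, norm_one])
  refine mem_axisFixedSet_iff.2 ⟨⟨?_, ?_⟩, rfl, rfl⟩
  · simp only [brieskornAxisCurve, cons_val_zero, cons_val_one]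
    rw [mul_pow, hε, one_mul, sq_I_mul_exp_half, add_neg_cancel]
  · simp only [brieskornAxisCurve, cons_val_zero, cons_val_one, normSq_eq_norm_sq, norm_mul,
      norm_I, norm_exp_ofReal_mul_I, hεnorm]
    norm_num

theorem norm_eq_one_of_pow_add_sq_eq_zero {k : ℕ} {a b : ℂ} (hab : a ^ k + b ^ 2 = 0)
    (hnorm : normSq a + normSq b = 2) : ‖a‖ = 1 := by
  have hb : ‖b‖ ^ 2 = ‖a‖ ^ k := by
    rw [← norm_pow, ← norm_pow, eq_neg_of_add_eq_zero_right hab, norm_neg]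
  rw [normSq_eq_norm_sq, normSq_eq_norm_sq, hb] at hnorm
  exact eq_one_of_pow_add_pow_eq_two (norm_nonneg a) two_ne_zero hnorm

theorem axisFixedSet_eq_union (k : ℕ) :
    axisFixedSet k = range (brieskornAxisCurve k 1) ∪ range (brieskornAxisCurve k (-1)) := by
  refine Subset.antisymm (fun z hz => ?_) (union_subset ?_ ?_)
  · obtain ⟨⟨heq, hnorm⟩, h2, h3⟩ := mem_axisFixedSet_iff.1 hz
    have hz0 : exp ((z 0).arg * I) = z 0 := by
      simpa [norm_eq_one_of_pow_add_sq_eq_zero heq hnorm] using norm_mul_exp_arg_mul_I (z 0)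
    have hz1 : z 1 ^ 2 = (I * exp (((k : ℝ) * (z 0).arg / 2 : ℝ) * I)) ^ 2 := by
      rw [sq_I_mul_exp_half, hz0]; linear_combination heq
    rcases sq_eq_sq_iff_eq_or_eq_neg.1 hz1 with h1 | h1
    · refine Or.inl ⟨(z 0).arg, funext fun j => ?_⟩
      fin_cases j <;> simp [brieskornAxisCurve, hz0, h1, h2, h3]
    · refine Or.inr ⟨(z 0).arg, funext fun j => ?_⟩
      fin_cases j <;> simp [brieskornAxisCurve, hz0, h1, h2, h3]
  · exact range_subset_iff.2 (brieskornAxisCurve_mem (one_pow 2))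
  · exact range_subset_iff.2 (brieskornAxisCurve_mem (by norm_num))

theorem axisFixedSet_eq_range_of_odd {k : ℕ} (hk : Odd k) :
    axisFixedSet k = range (brieskornAxisCurve k 1) := by
  rw [axisFixedSet_eq_union, union_eq_left]
  rintro _ ⟨φ, rfl⟩
  exact ⟨φ + 2 * π, by rw [brieskornAxisCurve_add_two_pi, hk.neg_one_pow, mul_one]⟩

theorem isClosed_range_brieskornAxisCurve {k : ℕ} (hk : Even k) (ε : ℂ) :
    IsClosed (range (brieskornAxisCurve k ε)) := by
  have hper : Function.Periodic (brieskornAxisCurve k ε) (2 * π) := fun φ => by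
    rw [brieskornAxisCurve_add_two_pi, hk.neg_one_pow, one_mul]
  exact (hper.compact_of_continuous Real.two_pi_pos.ne'
    (continuous_brieskornAxisCurve k ε)).isClosed

theorem disjoint_range_brieskornAxisCurve {k : ℕ} (hk : Even k) :
    Disjoint (range (brieskornAxisCurve k 1)) (range (brieskornAxisCurve k (-1))) := by
  obtain ⟨m, hkm⟩ := hk
  rw [← two_mul] at hkm
  refine disjoint_range_iff.2 fun φ ψ h => ?_
  have h1 := congrFun h 1
  rw [brieskornAxisCurve_one_eq_of_two_mul hkm, brieskornAxisCurve_one_eq_of_two_mul hkm,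
    ← congrFun h 0] at h1
  have ha : brieskornAxisCurve k 1 φ 0 ≠ 0 := exp_ne_zero _
  exact pow_ne_zero m ha
    (by linear_combination (-I / 2) * h1 + brieskornAxisCurve k 1 φ 0 ^ m * I_sq)

theorem brieskorn_axis_fixed_set_general (k : ℕ) :
    axisFixedSet k =
      {z | ∃ φ : ℝ,
        z = ![Complex.exp (φ * Complex.I),
              Complex.I * Complex.exp (((k : ℝ) * φ / 2 : ℝ) * Complex.I), 0, 0] ∨
        z = ![Complex.exp (φ * Complex.I),
              -(Complex.I * Complex.exp (((k : ℝ) * φ / 2 : ℝ) * Complex.I)), 0, 0]} ∧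
    (Odd k → IsConnected (axisFixedSet k)) ∧
    (Even k → Nonempty (ConnectedComponents (axisFixedSet k) ≃ Fin 2)) := by
  refine ⟨?_, fun hk => ?_, fun hk => ?_⟩
  · ext z
    simp [axisFixedSet_eq_union, brieskornAxisCurve, exists_or, eq_comm]
  · rw [axisFixedSet_eq_range_of_odd hk]
    exact isConnected_range (continuous_brieskornAxisCurve k 1)
  · rw [axisFixedSet_eq_union]
    exact nonempty_connectedComponents_union_equiv_fin_two
      (isClosed_range_brieskornAxisCurve hk 1) (isClosed_range_brieskornAxisCurve hk (-1))
      (disjoint_range_brieskornAxisCurve hk)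
      (isConnected_range (continuous_brieskornAxisCurve k 1))
      (isConnected_range (continuous_brieskornAxisCurve k (-1)))

/-- The fixed-point set of the rotations about the `z₁`-axis on `W_k⁵` is
exactly `{(e^{iφ}, ±i e^{ikφ/2}, 0, 0) : φ ∈ ℝ}`; it is connected when `k` is odd and
has exactly two connected components when `k` is even. -/
theorem brieskorn_axis_fixed_set (k : ℕ) (hk : 0 < k) :
    axisFixedSet k =
      {z | ∃ φ : ℝ,
        z = ![Complex.exp (φ * Complex.I),
              Complex.I * Complex.exp (((k : ℝ) * φ / 2 : ℝ) * Complex.I), 0, 0] ∨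
        z = ![Complex.exp (φ * Complex.I),
              -(Complex.I * Complex.exp (((k : ℝ) * φ / 2 : ℝ) * Complex.I)), 0, 0]} ∧
    (Odd k → IsConnected (axisFixedSet k)) ∧
    (Even k → Nonempty (ConnectedComponents (axisFixedSet k) ≃ Fin 2)) :=
  brieskorn_axis_fixed_set_general k
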